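/- (The 'if' direction of the main theorem.) For any Lb*₁-sequent Π → C in which the variable q does not occur: if the sequent τ⁻(Π) → τ⁺(C) is derivable in Lb*, then Π → C is derivable in Lb*₁. -/
import Mathlib


/-! Formulas of the Lambek calculus with brackets (and the unit constant `one`,
which is used only in the calculus Lb*₁). Variables are indexed by `ℕ`. -/
inductive Fm : Type
  | var : ℕ → Fm            -- variables p₁, p₂, …
  | one : Fm                 -- the unit constant 𝟏
  | ldiv : Fm → Fm → Fm      -- `ldiv A B` is A \ B (left division)
  | rdiv : Fm → Fm → Fm      -- `rdiv B A` is B / A (right division)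
  | mul : Fm → Fm → Fm       -- `mul A B` is A · B (product)
  | dia : Fm → Fm            -- ⟨⟩A
  | box : Fm → Fm            -- []⁻¹A

/-- Meta-formulas are lists of items; an item is a formula or a bracketed
meta-formula.  The comma is list append (hence associative with unit `[]`, the
empty meta-formula Λ). -/
inductive Item : Type
  | fm : Fm → Item
  | br : List Item → Item

/-- One-hole contexts Δ(·) in meta-formulas: the hole is a designated
occurrence of a sub-meta-formula, possibly under brackets. -/
inductive Ctx : Type
  | hole : List Item → List Item → Ctx
  | br : List Item → Ctx → List Item → Ctx

/-- Plugging a meta-formula into the hole of a context. -/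
def Ctx.plug : Ctx → List Item → List Item
  | .hole l r, Γ => l ++ Γ ++ r
  | .br l c r, Γ => l ++ Item.br (c.plug Γ) :: r

/-- Derivability in the Lambek calculus with brackets Lb* (no unit rules). -/
inductive LbS : List Item → Fm → Prop
  | ax (p : ℕ) : LbS [.fm (.var p)] (.var p)
  | ldiv_l (Γ : List Item) (Δ : Ctx) (A B C : Fm) :
      LbS Γ A → LbS (Δ.plug [.fm B]) C → LbS (Δ.plug (Γ ++ [.fm (.ldiv A B)])) C
  | ldiv_r (Γ : List Item) (A B : Fm) :
      LbS (.fm A :: Γ) B → LbS Γ (.ldiv A B)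
  | rdiv_l (Γ : List Item) (Δ : Ctx) (A B C : Fm) :
      LbS Γ A → LbS (Δ.plug [.fm B]) C → LbS (Δ.plug (.fm (.rdiv B A) :: Γ)) C
  | rdiv_r (Γ : List Item) (A B : Fm) :
      LbS (Γ ++ [.fm A]) B → LbS Γ (.rdiv B A)
  | mul_l (Δ : Ctx) (A B C : Fm) :
      LbS (Δ.plug [.fm A, .fm B]) C → LbS (Δ.plug [.fm (.mul A B)]) C
  | mul_r (Γ Θ : List Item) (A B : Fm) :
      LbS Γ A → LbS Θ B → LbS (Γ ++ Θ) (.mul A B)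
  | dia_l (Δ : Ctx) (A C : Fm) :
      LbS (Δ.plug [.br [.fm A]]) C → LbS (Δ.plug [.fm (.dia A)]) C
  | dia_r (Γ : List Item) (A : Fm) :
      LbS Γ A → LbS [.br Γ] (.dia A)
  | box_l (Δ : Ctx) (A C : Fm) :
      LbS (Δ.plug [.fm A]) C → LbS (Δ.plug [.br [.fm (.box A)]]) C
  | box_r (Γ : List Item) (A : Fm) :
      LbS [.br Γ] A → LbS Γ (.box A)

/-- Derivability in the Lambek calculus with brackets and the unit, Lb*₁. -/
inductive Lb1 : List Item → Fm → Prop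
  | ax (p : ℕ) : Lb1 [.fm (.var p)] (.var p)
  | ldiv_l (Γ : List Item) (Δ : Ctx) (A B C : Fm) :
      Lb1 Γ A → Lb1 (Δ.plug [.fm B]) C → Lb1 (Δ.plug (Γ ++ [.fm (.ldiv A B)])) C
  | ldiv_r (Γ : List Item) (A B : Fm) :
      Lb1 (.fm A :: Γ) B → Lb1 Γ (.ldiv A B)
  | rdiv_l (Γ : List Item) (Δ : Ctx) (A B C : Fm) :
      Lb1 Γ A → Lb1 (Δ.plug [.fm B]) C → Lb1 (Δ.plug (.fm (.rdiv B A) :: Γ)) C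
  | rdiv_r (Γ : List Item) (A B : Fm) :
      Lb1 (Γ ++ [.fm A]) B → Lb1 Γ (.rdiv B A)
  | mul_l (Δ : Ctx) (A B C : Fm) :
      Lb1 (Δ.plug [.fm A, .fm B]) C → Lb1 (Δ.plug [.fm (.mul A B)]) C
  | mul_r (Γ Θ : List Item) (A B : Fm) :
      Lb1 Γ A → Lb1 Θ B → Lb1 (Γ ++ Θ) (.mul A B)
  | dia_l (Δ : Ctx) (A C : Fm) :
      Lb1 (Δ.plug [.br [.fm A]]) C → Lb1 (Δ.plug [.fm (.dia A)]) C
  | dia_r (Γ : List Item) (A : Fm) :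
      Lb1 Γ A → Lb1 [.br Γ] (.dia A)
  | box_l (Δ : Ctx) (A C : Fm) :
      Lb1 (Δ.plug [.fm A]) C → Lb1 (Δ.plug [.br [.fm (.box A)]]) C
  | box_r (Γ : List Item) (A : Fm) :
      Lb1 [.br Γ] A → Lb1 Γ (.box A)
  | one_l (Δ : Ctx) (C : Fm) :
      Lb1 (Δ.plug []) C → Lb1 (Δ.plug [.fm .one]) C
  | one_r : Lb1 [] .one

/-- `ones n` is the meta-formula 𝟏ⁿ = 𝟏, 𝟏, …, 𝟏 (n times). -/
def ones (n : ℕ) : List Item := List.replicate n (.fm .one)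

/-- Derivability in the modified calculus Lb*₁′: the rule (𝟏→) is removed and
the axioms (→𝟏), (ax) and the rules (→⟨⟩), ([]⁻¹→) are replaced by their
primed versions; all other rules of Lb*₁ are kept intact. -/
inductive Lb1' : List Item → Fm → Prop
  | ax' (k m p : ℕ) :
      Lb1' (ones k ++ .fm (.var p) :: ones m) (.var p)
  | one_r' (k : ℕ) : Lb1' (ones k) .one
  | ldiv_l (Γ : List Item) (Δ : Ctx) (A B C : Fm) :
      Lb1' Γ A → Lb1' (Δ.plug [.fm B]) C → Lb1' (Δ.plug (Γ ++ [.fm (.ldiv A B)])) C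
  | ldiv_r (Γ : List Item) (A B : Fm) :
      Lb1' (.fm A :: Γ) B → Lb1' Γ (.ldiv A B)
  | rdiv_l (Γ : List Item) (Δ : Ctx) (A B C : Fm) :
      Lb1' Γ A → Lb1' (Δ.plug [.fm B]) C → Lb1' (Δ.plug (.fm (.rdiv B A) :: Γ)) C
  | rdiv_r (Γ : List Item) (A B : Fm) :
      Lb1' (Γ ++ [.fm A]) B → Lb1' Γ (.rdiv B A)
  | mul_l (Δ : Ctx) (A B C : Fm) :
      Lb1' (Δ.plug [.fm A, .fm B]) C → Lb1' (Δ.plug [.fm (.mul A B)]) C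
  | mul_r (Γ Θ : List Item) (A B : Fm) :
      Lb1' Γ A → Lb1' Θ B → Lb1' (Γ ++ Θ) (.mul A B)
  | dia_l (Δ : Ctx) (A C : Fm) :
      Lb1' (Δ.plug [.br [.fm A]]) C → Lb1' (Δ.plug [.fm (.dia A)]) C
  | dia_r' (k m : ℕ) (Γ : List Item) (A : Fm) :
      Lb1' Γ (.dia A) → Lb1' (ones k ++ .br Γ :: ones m) (.dia A)
  | box_l' (k m : ℕ) (Δ : Ctx) (B C : Fm) :
      Lb1' (Δ.plug [.fm B]) C →
      Lb1' (Δ.plug [.br (ones k ++ .fm (.box B) :: ones m)]) C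
  | box_r (Γ : List Item) (A : Fm) :
      Lb1' [.br Γ] A → Lb1' Γ (.box A)

/-- The formula q \ q. -/
def qq (q : ℕ) : Fm := .ldiv (.var q) (.var q)

mutual
/-- The translation τ⁺ (for positive occurrences), with distinguished variable q. -/
def tauP (q : ℕ) : Fm → Fm
  | .one => qq q
  | .var p => .mul (.mul (qq q) (.var p)) (qq q)
  | .ldiv A B => .ldiv (tauM q A) (tauP q B)
  | .rdiv B A => .rdiv (tauP q B) (tauP q A)
  | .mul A B => .mul (tauP q A) (tauP q B)
  | .dia A => .mul (.mul (qq q) (.dia (tauP q A))) (qq q)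
  | .box A => .box (tauM q A)
/-- The translation τ⁻ (for negative occurrences), with distinguished variable q. -/
def tauM (q : ℕ) : Fm → Fm
  | .one => qq q
  | .var p => .var p
  | .ldiv A B => .ldiv (tauM q A) (tauM q B)
  | .rdiv B A => .rdiv (tauM q B) (tauP q A)
  | .mul A B => .mul (tauM q A) (tauM q B)
  | .dia A => .dia (tauM q A)
  | .box A => .ldiv (qq q) (.rdiv (.box (tauM q A)) (qq q))
end

mutual
/-- τ⁻ on items of meta-formulas. -/
def tauItem (q : ℕ) : Item → Item
  | .fm A => .fm (tauM q A)
  | .br Γ => .br (tauMeta q Γ)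
/-- τ⁻ on meta-formulas. -/
def tauMeta (q : ℕ) : List Item → List Item
  | [] => []
  | i :: Γ => tauItem q i :: tauMeta q Γ
end

/-- The variable q does not occur in a formula. -/
def Fm.qFree (q : ℕ) : Fm → Prop
  | .var p => p ≠ q
  | .one => True
  | .ldiv A B => A.qFree q ∧ B.qFree q
  | .rdiv B A => B.qFree q ∧ A.qFree q
  | .mul A B => A.qFree q ∧ B.qFree q
  | .dia A => A.qFree q
  | .box A => A.qFree q

mutual
/-- The variable q does not occur in an item. -/
def Item.qFree (q : ℕ) : Item → Prop
  | .fm A => A.qFree q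
  | .br Γ => MetaQFree q Γ
/-- The variable q does not occur in a meta-formula. -/
def MetaQFree (q : ℕ) : List Item → Prop
  | [] => True
  | i :: Γ => i.qFree q ∧ MetaQFree q Γ
end

/-- Substitution of the formula E for the variable q in a formula (the unit
constant is not affected). -/
def Fm.subst (q : ℕ) (E : Fm) : Fm → Fm
  | .var p => if p = q then E else .var p
  | .one => .one
  | .ldiv A B => .ldiv (Fm.subst q E A) (Fm.subst q E B)
  | .rdiv B A => .rdiv (Fm.subst q E B) (Fm.subst q E A)
  | .mul A B => .mul (Fm.subst q E A) (Fm.subst q E B)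
  | .dia A => .dia (Fm.subst q E A)
  | .box A => .box (Fm.subst q E A)

mutual
/-- Substitution of E for the variable q in an item. -/
def Item.subst (q : ℕ) (E : Fm) : Item → Item
  | .fm A => .fm (Fm.subst q E A)
  | .br Γ => .br (Meta.subst q E Γ)
/-- Substitution of E for the variable q in a meta-formula. -/
def Meta.subst (q : ℕ) (E : Fm) : List Item → List Item
  | [] => []
  | i :: Γ => Item.subst q E i :: Meta.subst q E Γ
end

/-- A formula contains no occurrence of the unit constant (i.e. it is an
Lb*-formula). -/
def Fm.unitFree : Fm → Prop
  | .var _ => True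
  | .one => False
  | .ldiv A B => A.unitFree ∧ B.unitFree
  | .rdiv B A => B.unitFree ∧ A.unitFree
  | .mul A B => A.unitFree ∧ B.unitFree
  | .dia A => A.unitFree
  | .box A => A.unitFree

mutual
/-- The yield of an item: erase all brackets. -/
def Item.yield : Item → List Fm
  | .fm A => [A]
  | .br Γ => yieldMeta Γ
/-- The yield of a meta-formula: the list of its formulas, with all brackets erased. -/
def yieldMeta : List Item → List Fm
  | [] => []
  | i :: Γ => i.yield ++ yieldMeta Γ
end

/-- A categorial grammar over the alphabet α: a lexical relation ▷ between
letters and formulas, and a target formula H. -/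
structure Grammar (α : Type) where
  rel : α → Fm → Prop
  target : Fm

/-- The lexical relation of the grammar is finite. -/
def Grammar.Finite {α : Type} (G : Grammar α) : Prop :=
  {p : α × Fm | G.rel p.1 p.2}.Finite

/-- The grammar is an Lb*-grammar: no occurrence of the unit constant. -/
def Grammar.UnitFree {α : Type} (G : Grammar α) : Prop :=
  G.target.unitFree ∧ ∀ a A, G.rel a A → A.unitFree

/-- The variable q does not occur in the grammar. -/
def Grammar.AvoidsVar {α : Type} (q : ℕ) (G : Grammar α) : Prop :=
  G.target.qFree q ∧ ∀ a A, G.rel a A → A.qFree q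

/-- The translated grammar: τ⁻ applied to all formulas in the lexical
relation and τ⁺ to the target formula. -/
def Grammar.translate {α : Type} (q : ℕ) (G : Grammar α) : Grammar α :=
  ⟨fun a A => ∃ B, G.rel a B ∧ A = tauM q B, tauP q G.target⟩

/-- The language t-generated by a grammar, relative to a derivability
relation D: a word a₁…aₙ is t-accepted if aᵢ ▷ Aᵢ for some formulas Aᵢ and
some meta-formula Γ with yield A₁,…,Aₙ is derivably mapped to the target. -/
def tLang {α : Type} (D : List Item → Fm → Prop) (G : Grammar α) : Set (List α) :=
  {w | ∃ As : List Fm, List.Forall₂ G.rel w As ∧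
        ∃ Γ : List Item, D Γ G.target ∧ yieldMeta Γ = As}

/-- The language s-generated by a grammar, relative to a derivability
relation D: a word a₁…aₙ is s-accepted if aᵢ ▷ Aᵢ for some formulas Aᵢ such
that the bracket-free sequent A₁,…,Aₙ → H is derivable. -/
def sLang {α : Type} (D : List Item → Fm → Prop) (G : Grammar α) : Set (List α) :=
  {w | ∃ As : List Fm, List.Forall₂ G.rel w As ∧ D (As.map Item.fm) G.target}

/-! ### Auxiliary infrastructure for the proof -/

/-- Composition of one-hole contexts: the hole of `c.comp d` is the hole of
`d` placed inside the hole of `c`. -/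
def Ctx.comp : Ctx → Ctx → Ctx
  | .hole l r, .hole l' r' => .hole (l ++ l') (r' ++ r)
  | .hole l r, .br l' c r' => .br (l ++ l') c (r' ++ r)
  | .br l c r, d => .br l (c.comp d) r

@[simp] theorem Ctx.plug_comp (c d : Ctx) (Γ : List Item) :
    (c.comp d).plug Γ = c.plug (d.plug Γ) := by
  induction c generalizing d with
  | hole l r => cases d <;> simp [Ctx.comp, Ctx.plug]
  | br l c r ih => simp [Ctx.comp, Ctx.plug, ih]

@[simp] theorem Ctx.plug_hole (l r Γ : List Item) :
    (Ctx.hole l r).plug Γ = l ++ Γ ++ r := rfl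

@[simp] theorem Ctx.plug_br (l r Γ : List Item) (c : Ctx) :
    (Ctx.br l c r).plug Γ = l ++ Item.br (c.plug Γ) :: r := rfl

/-- Splitting a list equation `l ++ i :: r = X ++ Y`. -/
theorem cons_split {α : Type} {l r X Y : List α} {i : α}
    (h : l ++ i :: r = X ++ Y) :
    (∃ t, X = l ++ i :: t ∧ r = t ++ Y) ∨ (∃ t, l = X ++ t ∧ Y = t ++ i :: r) := by
  rcases List.append_eq_append_iff.mp h with ⟨a, ha1, ha2⟩ | ⟨a, ha1, ha2⟩
  · -- X = l ++ a, i :: r = a ++ Y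
    cases a with
    | nil => right; exact ⟨[], by simpa using ha1.symm, by simpa using ha2.symm⟩
    | cons x t =>
      left
      obtain ⟨rfl, rfl⟩ : x = i ∧ r = t ++ Y := by
        constructor
        · exact (List.cons.injEq _ _ _ _ ▸ ha2).1.symm
        · exact (List.cons.injEq _ _ _ _ ▸ ha2).2
      exact ⟨t, ha1, rfl⟩
  · -- l = X ++ a, Y = a ++ i :: r
    right; exact ⟨a, ha1, ha2⟩
/-- Overlap analysis: a designated single-item occurrence (the cut formula)
versus a designated meta-formula occurrence (the active material of a rule)
within the same meta-formula: either the item occurs inside the meta-formula,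
or the two occurrences are disjoint. -/
theorem overlap (A : Fm) :
    ∀ (Δ Δ' : Ctx) (Θ : List Item),
    Δ.plug [Item.fm A] = Δ'.plug Θ →
    (∃ Δ₀ : Ctx, Θ = Δ₀.plug [Item.fm A] ∧ ∀ Ψ, Δ.plug Ψ = Δ'.plug (Δ₀.plug Ψ)) ∨
    (∃ g h : List Item → Ctx,
      (∀ Ψ Φ, (g Ψ).plug Φ = (h Φ).plug Ψ) ∧
      (∀ Ψ, Δ.plug Ψ = (h Θ).plug Ψ) ∧
      (∀ Φ, Δ'.plug Φ = (g [Item.fm A]).plug Φ)) := by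
  intro Δ
  induction Δ with
  | hole l₁ r₁ =>
    intro Δ' Θ h
    cases Δ' with
    | hole l r =>
      have h' : l₁ ++ Item.fm A :: r₁ = l ++ (Θ ++ r) := by
        simpa [Ctx.plug] using h
      rcases cons_split h' with ⟨t, hl, hr⟩ | ⟨t, hl, h2⟩
      · right
        refine ⟨fun Ψ => .hole (l₁ ++ Ψ ++ t) r, fun Φ => .hole l₁ (t ++ Φ ++ r),
          ?_, ?_, ?_⟩ <;> intros <;> simp_all [Ctx.plug]
      · rcases cons_split h2.symm with ⟨s, hΘ, hr₁⟩ | ⟨s, ht, hr⟩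
        · left
          exact ⟨.hole t s, by simp [hΘ, Ctx.plug], by intro Ψ; simp_all [Ctx.plug]⟩
        · right
          refine ⟨fun Ψ => .hole l (s ++ Ψ ++ r₁), fun Φ => .hole (l ++ Φ ++ s) r₁,
            ?_, ?_, ?_⟩ <;> intros <;> simp_all [Ctx.plug]
    | br l c r =>
      have h' : l₁ ++ Item.fm A :: r₁ = l ++ (Item.br (c.plug Θ) :: r) := by
        simpa [Ctx.plug] using h
      rcases cons_split h' with ⟨t, hl, hr⟩ | ⟨t, hl, h2⟩
      · right
        refine ⟨fun Ψ => .br (l₁ ++ Ψ ++ t) c r,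
          fun Φ => .hole l₁ (t ++ Item.br (c.plug Φ) :: r), ?_, ?_, ?_⟩ <;>
          intros <;> simp_all [Ctx.plug]
      · cases t with
        | nil => simp at h2
        | cons x t' =>
          obtain ⟨hx, hr⟩ : Item.br (c.plug Θ) = x ∧ r = t' ++ Item.fm A :: r₁ := by
            simpa using h2
          right
          refine ⟨fun Ψ => .br l c (t' ++ Ψ ++ r₁),
            fun Φ => .hole (l ++ Item.br (c.plug Φ) :: t') r₁, ?_, ?_, ?_⟩ <;>
            intros <;> simp_all [Ctx.plug]
  | br l₁ c r₁ ih =>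
    intro Δ' Θ h
    cases Δ' with
    | hole l r =>
      have h' : l₁ ++ Item.br (c.plug [Item.fm A]) :: r₁ = l ++ (Θ ++ r) := by
        simpa [Ctx.plug] using h
      rcases cons_split h' with ⟨t, hl, hr⟩ | ⟨t, hl, h2⟩
      · right
        refine ⟨fun Ψ => .hole (l₁ ++ Item.br (c.plug Ψ) :: t) r,
          fun Φ => .br l₁ c (t ++ Φ ++ r), ?_, ?_, ?_⟩ <;>
          intros <;> simp_all [Ctx.plug]
      · rcases cons_split h2.symm with ⟨s, hΘ, hr₁⟩ | ⟨s, ht, hr⟩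
        · left
          exact ⟨.br t c s, by simp [hΘ, Ctx.plug], by intro Ψ; simp_all [Ctx.plug]⟩
        · right
          refine ⟨fun Ψ => .hole l (s ++ Item.br (c.plug Ψ) :: r₁),
            fun Φ => .br (l ++ Φ ++ s) c r₁, ?_, ?_, ?_⟩ <;>
            intros <;> simp_all [Ctx.plug]
    | br l c' r =>
      have h' : l₁ ++ Item.br (c.plug [Item.fm A]) :: r₁
          = l ++ (Item.br (c'.plug Θ) :: r) := by
        simpa [Ctx.plug] using h
      rcases cons_split h' with ⟨t, hl, hr⟩ | ⟨t, hl, h2⟩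
      · right
        refine ⟨fun Ψ => .br (l₁ ++ Item.br (c.plug Ψ) :: t) c' r,
          fun Φ => .br l₁ c (t ++ Item.br (c'.plug Φ) :: r), ?_, ?_, ?_⟩ <;>
          intros <;> simp_all [Ctx.plug]
      · cases t with
        | nil =>
          obtain ⟨hx, hr⟩ : c.plug [Item.fm A] = c'.plug Θ ∧ r₁ = r := by
            simpa using h2.symm
          simp only [List.append_nil] at hl
          rcases ih c' Θ hx with ⟨Δ₀, hΘ, hplug⟩ | ⟨g₀, h₀, hex, hΔ, hΔ'⟩
          · left
            exact ⟨Δ₀, hΘ, by intro Ψ; simp_all [Ctx.plug]⟩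
          · right
            refine ⟨fun Ψ => .br l (g₀ Ψ) r, fun Φ => .br l (h₀ Φ) r, ?_, ?_, ?_⟩ <;>
              intros <;> simp_all [Ctx.plug]
        | cons z t' =>
          obtain ⟨hz, hr⟩ : Item.br (c'.plug Θ) = z ∧ r = t' ++ Item.br (c.plug [Item.fm A]) :: r₁ := by
            simpa using h2
          right
          refine ⟨fun Ψ => .br l c' (t' ++ Item.br (c.plug Ψ) :: r₁),
            fun Φ => .br (l ++ Item.br (c'.plug Φ) :: t') c r₁, ?_, ?_, ?_⟩ <;>
            intros <;> simp_all [Ctx.plug]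
theorem plug_single_eq_fm {Δ : Ctx} {A : Fm} {j : Fm}
    (h : Δ.plug [Item.fm A] = [Item.fm j]) :
    A = j ∧ ∀ Ψ, Δ.plug Ψ = Ψ := by
  cases Δ with
  | hole l r =>
    simp only [Ctx.plug] at h
    cases l with
    | nil =>
      obtain ⟨h1, h2⟩ : Item.fm A = Item.fm j ∧ r = [] := by simpa using h
      cases h1
      subst h2
      exact ⟨rfl, by intro Ψ; simp [Ctx.plug]⟩
    | cons x l' => simp at h
  | br l c r =>
    simp only [Ctx.plug] at h
    cases l with
    | nil => simp at h
    | cons x l' => simp at h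

theorem plug_single_eq_br1 {Δ : Ctx} {A : Fm} {X : List Item}
    (h : Δ.plug [Item.fm A] = [Item.br X]) :
    ∃ Δ₁ : Ctx, X = Δ₁.plug [Item.fm A] ∧ ∀ Ψ, Δ.plug Ψ = [Item.br (Δ₁.plug Ψ)] := by
  cases Δ with
  | hole l r =>
    simp only [Ctx.plug] at h
    cases l with
    | nil => simp at h
    | cons x l' => simp at h
  | br l c r =>
    simp only [Ctx.plug] at h
    cases l with
    | nil =>
      obtain ⟨h1, h2⟩ : Item.br (c.plug [Item.fm A]) = Item.br X ∧ r = [] := by simpa using h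
      cases h1
      subst h2
      exact ⟨c, rfl, by intro Ψ; simp [Ctx.plug]⟩
    | cons x l' => simp at h

theorem plug_single_ne_nil {Δ : Ctx} {A : Fm} : Δ.plug [Item.fm A] ≠ [] := by
  cases Δ <;> simp [Ctx.plug]

theorem plug_append_split {A : Fm} {Δ : Ctx} {X Y : List Item}
    (h : Δ.plug [Item.fm A] = X ++ Y) :
    (∃ Δ₀ : Ctx, X = Δ₀.plug [Item.fm A] ∧ ∀ Ψ, Δ.plug Ψ = Δ₀.plug Ψ ++ Y) ∨
    (∃ Δ₀ : Ctx, Y = Δ₀.plug [Item.fm A] ∧ ∀ Ψ, Δ.plug Ψ = X ++ Δ₀.plug Ψ) := by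
  cases Δ with
  | hole l r =>
    have h' : l ++ Item.fm A :: r = X ++ Y := by simpa [Ctx.plug] using h
    rcases cons_split h' with ⟨t, h1, h2⟩ | ⟨t, h1, h2⟩
    · left; exact ⟨.hole l t, by simp [h1, Ctx.plug], by intro Ψ; simp [Ctx.plug, h2]⟩
    · right; exact ⟨.hole t r, by simp [h2, Ctx.plug], by intro Ψ; simp [Ctx.plug, h1]⟩
  | br l c r =>
    have h' : l ++ Item.br (c.plug [Item.fm A]) :: r = X ++ Y := by simpa [Ctx.plug] using h
    rcases cons_split h' with ⟨t, h1, h2⟩ | ⟨t, h1, h2⟩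
    · left; exact ⟨.br l c t, by simp [h1, Ctx.plug], by intro Ψ; simp [Ctx.plug, h2]⟩
    · right; exact ⟨.br t c r, by simp [h2, Ctx.plug], by intro Ψ; simp [Ctx.plug, h1]⟩
/-- Commutation of cut with a rule of the right premise acting at a position
disjoint from the cut formula. -/
theorem disjoint_commute {A : Fm} {Γ : List Item} {Δ Δ₂ : Ctx}
    {Θ Θpre : List Item} {C : Fm} {g h : List Item → Ctx}
    (hex : ∀ Ψ Φ, (g Ψ).plug Φ = (h Φ).plug Ψ)
    (hΔ : ∀ Ψ, Δ.plug Ψ = (h Θ).plug Ψ)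
    (hΔ' : ∀ Φ, Δ₂.plug Φ = (g [Item.fm A]).plug Φ)
    (ih : ∀ Δ' : Ctx, Δ₂.plug Θpre = Δ'.plug [Item.fm A] → Lb1 (Δ'.plug Γ) C)
    (rule : ∀ c : Ctx, Lb1 (c.plug Θpre) C → Lb1 (c.plug Θ) C) :
    Lb1 (Δ.plug Γ) C := by
  have h1 := ih (h Θpre) (by rw [hΔ' Θpre, hex])
  rw [← hex Γ Θpre] at h1
  have h2 := rule (g Γ) h1
  rw [hΔ Γ, ← hex Γ Θ]
  exact h2

/-- The main lemma for cut elimination: induction on the derivation of the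
right premise, with the behaviour at principal positions supplied as
hypotheses. -/
theorem cutCore (A : Fm) (Γ : List Item)
    (Hvar : ∀ p, A = Fm.var p → Lb1 Γ (Fm.var p))
    (Hone : A = Fm.one → ∀ (Δ' : Ctx) (C : Fm), Lb1 (Δ'.plug []) C → Lb1 (Δ'.plug Γ) C)
    (Hldiv : ∀ A₁ A₂, A = Fm.ldiv A₁ A₂ → ∀ (Γ₂ : List Item) (Δ' : Ctx) (C : Fm),
        Lb1 Γ₂ A₁ → Lb1 (Δ'.plug [Item.fm A₂]) C → Lb1 (Δ'.plug (Γ₂ ++ Γ)) C)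
    (Hrdiv : ∀ A₁ A₂, A = Fm.rdiv A₂ A₁ → ∀ (Γ₂ : List Item) (Δ' : Ctx) (C : Fm),
        Lb1 Γ₂ A₁ → Lb1 (Δ'.plug [Item.fm A₂]) C → Lb1 (Δ'.plug (Γ ++ Γ₂)) C)
    (Hmul : ∀ A₁ A₂, A = Fm.mul A₁ A₂ → ∀ (Δ' : Ctx) (C : Fm),
        Lb1 (Δ'.plug [Item.fm A₁, Item.fm A₂]) C → Lb1 (Δ'.plug Γ) C)
    (Hdia : ∀ A₁, A = Fm.dia A₁ → ∀ (Δ' : Ctx) (C : Fm),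
        Lb1 (Δ'.plug [Item.br [Item.fm A₁]]) C → Lb1 (Δ'.plug Γ) C)
    (Hbox : ∀ A₁, A = Fm.box A₁ → ∀ (Δ' : Ctx) (C : Fm),
        Lb1 (Δ'.plug [Item.fm A₁]) C →
        ∀ Δ : Ctx, (∀ Ψ, Δ.plug Ψ = Δ'.plug [Item.br Ψ]) → Lb1 (Δ.plug Γ) C) :
    ∀ (S : List Item) (C : Fm), Lb1 S C →
      ∀ Δ : Ctx, S = Δ.plug [Item.fm A] → Lb1 (Δ.plug Γ) C := by
  intro S C d2
  induction d2 with
  | ax p =>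
    intro Δ h
    obtain ⟨hA, hid⟩ := plug_single_eq_fm h.symm
    rw [hid]
    exact Hvar p hA
  | ldiv_l Γ₂ Δ₂ A' B' C' prem1 prem2 ih1 ih2 =>
    intro Δ hEq
    rcases overlap A Δ Δ₂ _ hEq.symm with ⟨Δ₀, hΘ, hplug⟩ | ⟨g, h, hex, hΔ, hΔ'⟩
    · cases Δ₀ with
      | hole l r =>
        have h' : l ++ Item.fm A :: r = Γ₂ ++ [Item.fm (Fm.ldiv A' B')] := by
          simpa [Ctx.plug] using hΘ.symm
        rcases cons_split h' with ⟨t, h1, h2⟩ | ⟨t, h1, h2⟩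
        · have hcut := ih1 (Ctx.hole l t) (by simp [h1, Ctx.plug])
          have h3 := Lb1.ldiv_l _ Δ₂ A' B' C' hcut prem2
          rw [hplug Γ]
          simpa [Ctx.plug, h2] using h3
        · cases t with
          | nil =>
            obtain ⟨h3, h4⟩ : Item.fm (Fm.ldiv A' B') = Item.fm A ∧ r = [] := by
              simpa using h2
            have hA : A = Fm.ldiv A' B' := by injection h3 with hh; exact hh.symm
            have h5 := Hldiv A' B' hA Γ₂ Δ₂ C' prem1 prem2
            rw [hplug Γ]
            simpa [Ctx.plug, h1, h4] using h5
          | cons z t' => simp at h2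
      | br l c r =>
        have h' : l ++ Item.br (c.plug [Item.fm A]) :: r
            = Γ₂ ++ [Item.fm (Fm.ldiv A' B')] := by
          simpa [Ctx.plug] using hΘ.symm
        rcases cons_split h' with ⟨t, h1, h2⟩ | ⟨t, h1, h2⟩
        · have hcut := ih1 (Ctx.br l c t) (by simp [h1, Ctx.plug])
          have h3 := Lb1.ldiv_l _ Δ₂ A' B' C' hcut prem2
          rw [hplug Γ]
          simpa [Ctx.plug, h2] using h3
        · cases t with
          | nil => simp at h2
          | cons z t' => simp at h2
    · exact disjoint_commute hex hΔ hΔ' ih2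
        (fun c hh => Lb1.ldiv_l Γ₂ c A' B' C' prem1 hh)
  | ldiv_r Γ₂ A' B' prem ih =>
    intro Δ hEq
    refine Lb1.ldiv_r _ _ _ ?_
    have h1 := ih ((Ctx.hole [Item.fm A'] []).comp Δ) (by simp [Ctx.plug, hEq])
    simpa [Ctx.plug] using h1
  | rdiv_l Γ₂ Δ₂ A' B' C' prem1 prem2 ih1 ih2 =>
    intro Δ hEq
    rcases overlap A Δ Δ₂ _ hEq.symm with ⟨Δ₀, hΘ, hplug⟩ | ⟨g, h, hex, hΔ, hΔ'⟩
    · cases Δ₀ with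
      | hole l r =>
        have h' : l ++ Item.fm A :: r = Item.fm (Fm.rdiv B' A') :: Γ₂ := by
          simpa [Ctx.plug] using hΘ.symm
        cases l with
        | nil =>
          obtain ⟨h3, h4⟩ : Item.fm A = Item.fm (Fm.rdiv B' A') ∧ r = Γ₂ := by
            simpa using h'
          have hA : A = Fm.rdiv B' A' := by injection h3 with hh
          have h5 := Hrdiv A' B' hA Γ₂ Δ₂ C' prem1 prem2
          rw [hplug Γ]
          simpa [Ctx.plug, h4] using h5
        | cons x l' =>
          obtain ⟨h3, h4⟩ : x = Item.fm (Fm.rdiv B' A') ∧ l' ++ Item.fm A :: r = Γ₂ := by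
            simpa using h'
          have hcut := ih1 (Ctx.hole l' r) (by simp [h4.symm, Ctx.plug])
          have h5 := Lb1.rdiv_l _ Δ₂ A' B' C' hcut prem2
          rw [hplug Γ]
          simpa [Ctx.plug, h3] using h5
      | br l c r =>
        have h' : l ++ Item.br (c.plug [Item.fm A]) :: r
            = Item.fm (Fm.rdiv B' A') :: Γ₂ := by
          simpa [Ctx.plug] using hΘ.symm
        cases l with
        | nil => simp at h'
        | cons x l' =>
          obtain ⟨h3, h4⟩ : x = Item.fm (Fm.rdiv B' A')
              ∧ l' ++ Item.br (c.plug [Item.fm A]) :: r = Γ₂ := by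
            simpa using h'
          have hcut := ih1 (Ctx.br l' c r) (by simp [h4.symm, Ctx.plug])
          have h5 := Lb1.rdiv_l _ Δ₂ A' B' C' hcut prem2
          rw [hplug Γ]
          simpa [Ctx.plug, h3] using h5
    · exact disjoint_commute hex hΔ hΔ' ih2
        (fun c hh => Lb1.rdiv_l Γ₂ c A' B' C' prem1 hh)
  | rdiv_r Γ₂ A' B' prem ih =>
    intro Δ hEq
    refine Lb1.rdiv_r _ _ _ ?_
    have h1 := ih ((Ctx.hole [] [Item.fm A']).comp Δ) (by simp [Ctx.plug, hEq])
    simpa [Ctx.plug] using h1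
  | mul_l Δ₂ A' B' C' prem ih =>
    intro Δ hEq
    rcases overlap A Δ Δ₂ _ hEq.symm with ⟨Δ₀, hΘ, hplug⟩ | ⟨g, h, hex, hΔ, hΔ'⟩
    · obtain ⟨hA, hid⟩ := plug_single_eq_fm hΘ.symm
      have h5 := Hmul A' B' hA Δ₂ C' prem
      rw [hplug Γ, hid Γ]
      exact h5
    · exact disjoint_commute hex hΔ hΔ' ih (fun c hh => Lb1.mul_l c A' B' C' hh)
  | mul_r Γ₂ Θ₂ A' B' prem1 prem2 ih1 ih2 =>
    intro Δ hEq
    rcases plug_append_split hEq.symm with ⟨Δ₀, h1, h2⟩ | ⟨Δ₀, h1, h2⟩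
    · have h3 := ih1 Δ₀ h1
      rw [h2 Γ]
      exact Lb1.mul_r _ _ _ _ h3 prem2
    · have h3 := ih2 Δ₀ h1
      rw [h2 Γ]
      exact Lb1.mul_r _ _ _ _ prem1 h3
  | dia_l Δ₂ A' C' prem ih =>
    intro Δ hEq
    rcases overlap A Δ Δ₂ _ hEq.symm with ⟨Δ₀, hΘ, hplug⟩ | ⟨g, h, hex, hΔ, hΔ'⟩
    · obtain ⟨hA, hid⟩ := plug_single_eq_fm hΘ.symm
      have h5 := Hdia A' hA Δ₂ C' prem
      rw [hplug Γ, hid Γ]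
      exact h5
    · exact disjoint_commute hex hΔ hΔ' ih (fun c hh => Lb1.dia_l c A' C' hh)
  | dia_r Γ₂ A' prem ih =>
    intro Δ hEq
    obtain ⟨Δ₁, h1, h2⟩ := plug_single_eq_br1 hEq.symm
    have h3 := ih Δ₁ h1
    rw [h2 Γ]
    exact Lb1.dia_r _ _ h3
  | box_l Δ₂ B' C' prem ih =>
    intro Δ hEq
    rcases overlap A Δ Δ₂ _ hEq.symm with ⟨Δ₀, hΘ, hplug⟩ | ⟨g, h, hex, hΔ, hΔ'⟩
    · obtain ⟨Δ₁, h1, h2⟩ := plug_single_eq_br1 hΘ.symm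
      obtain ⟨hA, hid⟩ := plug_single_eq_fm h1.symm
      exact Hbox B' hA Δ₂ C' prem Δ (fun Ψ => by rw [hplug Ψ, h2 Ψ, hid Ψ])
    · exact disjoint_commute hex hΔ hΔ' ih (fun c hh => Lb1.box_l c B' C' hh)
  | box_r Γ₂ A' prem ih =>
    intro Δ hEq
    have h1 := ih (Ctx.br [] Δ []) (by simp [Ctx.plug, hEq])
    exact Lb1.box_r _ _ (by simpa [Ctx.plug] using h1)
  | one_l Δ₂ C' prem ih =>
    intro Δ hEq
    rcases overlap A Δ Δ₂ _ hEq.symm with ⟨Δ₀, hΘ, hplug⟩ | ⟨g, h, hex, hΔ, hΔ'⟩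
    · obtain ⟨hA, hid⟩ := plug_single_eq_fm hΘ.symm
      have h5 := Hone hA Δ₂ C' prem
      rw [hplug Γ, hid Γ]
      exact h5
    · exact disjoint_commute hex hΔ hΔ' ih (fun c hh => Lb1.one_l c C' hh)
  | one_r =>
    intro Δ hEq
    exact absurd hEq.symm plug_single_ne_nil
/-- Cut admissibility in Lb*₁, auxiliary version with a bound on the size of
the cut formula. -/
theorem cut_aux : ∀ (n : ℕ) (A : Fm), sizeOf A ≤ n → ∀ Γ, Lb1 Γ A →
    ∀ (Δ : Ctx) (C : Fm), Lb1 (Δ.plug [Item.fm A]) C → Lb1 (Δ.plug Γ) C := by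
  intro n
  induction n with
  | zero =>
    intro A hA
    exact absurd hA (by cases A <;> simp)
  | succ n ihn =>
    intro A hA Γ d1
    revert hA
    induction d1 with
    | ax p => intro _ Δ C d2; exact d2
    | ldiv_l Γ' Δ₁ A' B' C₁ prem1 prem2 ih1 ih2 =>
      intro hA Δ C d2
      have h1 := ih2 hA Δ C d2
      have h2 : Lb1 ((Δ.comp Δ₁).plug [Item.fm B']) C := by simpa using h1
      have h3 := Lb1.ldiv_l Γ' (Δ.comp Δ₁) A' B' C prem1 h2
      simpa using h3
    | rdiv_l Γ' Δ₁ A' B' C₁ prem1 prem2 ih1 ih2 =>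
      intro hA Δ C d2
      have h1 := ih2 hA Δ C d2
      have h2 : Lb1 ((Δ.comp Δ₁).plug [Item.fm B']) C := by simpa using h1
      have h3 := Lb1.rdiv_l Γ' (Δ.comp Δ₁) A' B' C prem1 h2
      simpa using h3
    | mul_l Δ₁ A' B' C₁ prem ih =>
      intro hA Δ C d2
      have h1 := ih hA Δ C d2
      have h2 : Lb1 ((Δ.comp Δ₁).plug [Item.fm A', Item.fm B']) C := by simpa using h1
      have h3 := Lb1.mul_l (Δ.comp Δ₁) A' B' C h2
      simpa using h3
    | dia_l Δ₁ A' C₁ prem ih =>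
      intro hA Δ C d2
      have h1 := ih hA Δ C d2
      have h2 : Lb1 ((Δ.comp Δ₁).plug [Item.br [Item.fm A']]) C := by simpa using h1
      have h3 := Lb1.dia_l (Δ.comp Δ₁) A' C h2
      simpa using h3
    | box_l Δ₁ A' C₁ prem ih =>
      intro hA Δ C d2
      have h3 : Lb1 ((Δ.comp Δ₁).plug [Item.fm A']) C := by simpa using ih hA Δ C d2
      exact (by simpa using Lb1.box_l (Δ.comp Δ₁) A' C h3)
    | one_l Δ₁ C₁ prem ih =>
      intro hA Δ C d2
      have h1 := ih hA Δ C d2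
      have h2 : Lb1 ((Δ.comp Δ₁).plug []) C := by simpa using h1
      have h3 := Lb1.one_l (Δ.comp Δ₁) C h2
      simpa using h3
    | one_r =>
      intro _ Δ C d2
      refine cutCore Fm.one [] ?_ ?_ ?_ ?_ ?_ ?_ ?_ _ C d2 Δ rfl
      · intro p h; exact Fm.noConfusion h
      · intro _ Δ' C0 hp; exact hp
      · intro X Y h; exact Fm.noConfusion h
      · intro X Y h; exact Fm.noConfusion h
      · intro X Y h; exact Fm.noConfusion h
      · intro X h; exact Fm.noConfusion h
      · intro X h; exact Fm.noConfusion h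
    | ldiv_r Γ' A₁ B₁ prem ih =>
      intro hA Δ C d2
      have s1 : sizeOf A₁ ≤ n := by simp at hA; omega
      have s2 : sizeOf B₁ ≤ n := by simp at hA; omega
      refine cutCore (Fm.ldiv A₁ B₁) Γ' ?_ ?_ ?_ ?_ ?_ ?_ ?_ _ C d2 Δ rfl
      · intro p h; exact Fm.noConfusion h
      · intro h; exact Fm.noConfusion h
      · intro X Y hXY Γ₂ Δ' C0 p1 p2
        injection hXY with e1 e2
        subst e1; subst e2
        have c1 := ihn A₁ s1 Γ₂ p1 (Ctx.hole [] Γ') B₁ (by simpa [Ctx.plug] using prem)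
        have c2 := ihn B₁ s2 _ (show Lb1 (Γ₂ ++ Γ') B₁ by simpa [Ctx.plug] using c1) Δ' C0 p2
        exact c2
      · intro X Y h; exact Fm.noConfusion h
      · intro X Y h; exact Fm.noConfusion h
      · intro X h; exact Fm.noConfusion h
      · intro X h; exact Fm.noConfusion h
    | rdiv_r Γ' A₁ B₁ prem ih =>
      intro hA Δ C d2
      have s1 : sizeOf A₁ ≤ n := by simp at hA; omega
      have s2 : sizeOf B₁ ≤ n := by simp at hA; omega
      refine cutCore (Fm.rdiv B₁ A₁) Γ' ?_ ?_ ?_ ?_ ?_ ?_ ?_ _ C d2 Δ rfl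
      · intro p h; exact Fm.noConfusion h
      · intro h; exact Fm.noConfusion h
      · intro X Y h; exact Fm.noConfusion h
      · intro X Y hXY Γ₂ Δ' C0 p1 p2
        injection hXY with e1 e2
        subst e1; subst e2
        have c1 := ihn A₁ s1 Γ₂ p1 (Ctx.hole Γ' []) B₁ (by simpa [Ctx.plug] using prem)
        have c2 := ihn B₁ s2 _ (show Lb1 (Γ' ++ Γ₂) B₁ by simpa [Ctx.plug] using c1) Δ' C0 p2
        exact c2
      · intro X Y h; exact Fm.noConfusion h
      · intro X h; exact Fm.noConfusion h
      · intro X h; exact Fm.noConfusion h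
    | mul_r Γ₁ Θ₁ A₁ B₁ prem1 prem2 ih1 ih2 =>
      intro hA Δ C d2
      have s1 : sizeOf A₁ ≤ n := by simp at hA; omega
      have s2 : sizeOf B₁ ≤ n := by simp at hA; omega
      refine cutCore (Fm.mul A₁ B₁) (Γ₁ ++ Θ₁) ?_ ?_ ?_ ?_ ?_ ?_ ?_ _ C d2 Δ rfl
      · intro p h; exact Fm.noConfusion h
      · intro h; exact Fm.noConfusion h
      · intro X Y h; exact Fm.noConfusion h
      · intro X Y h; exact Fm.noConfusion h
      · intro X Y hXY Δ' C0 hp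
        injection hXY with e1 e2
        subst e1; subst e2
        have c1 := ihn A₁ s1 Γ₁ prem1 (Δ'.comp (Ctx.hole [] [Item.fm B₁])) C0
          (by simpa [Ctx.plug] using hp)
        have c2 := ihn B₁ s2 Θ₁ prem2 (Δ'.comp (Ctx.hole Γ₁ [])) C0
          (by simpa [Ctx.plug] using c1)
        simpa [Ctx.plug] using c2
      · intro X h; exact Fm.noConfusion h
      · intro X h; exact Fm.noConfusion h
    | dia_r Γ₁ A₁ prem ih =>
      intro hA Δ C d2
      have s1 : sizeOf A₁ ≤ n := by simp at hA; omega
      refine cutCore (Fm.dia A₁) [Item.br Γ₁] ?_ ?_ ?_ ?_ ?_ ?_ ?_ _ C d2 Δ rfl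
      · intro p h; exact Fm.noConfusion h
      · intro h; exact Fm.noConfusion h
      · intro X Y h; exact Fm.noConfusion h
      · intro X Y h; exact Fm.noConfusion h
      · intro X Y h; exact Fm.noConfusion h
      · intro X hX Δ' C0 hp
        injection hX with e1
        subst e1
        have c1 := ihn A₁ s1 Γ₁ prem (Δ'.comp (Ctx.br [] (Ctx.hole [] []) [])) C0
          (by simpa [Ctx.plug] using hp)
        simpa [Ctx.plug] using c1
      · intro X h; exact Fm.noConfusion h
    | box_r Γ' A₁ prem ih =>
      intro hA Δ C d2
      have s1 : sizeOf A₁ ≤ n := by simp at hA; omega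
      refine cutCore (Fm.box A₁) Γ' ?_ ?_ ?_ ?_ ?_ ?_ ?_ _ C d2 Δ rfl
      · intro p h; exact Fm.noConfusion h
      · intro h; exact Fm.noConfusion h
      · intro X Y h; exact Fm.noConfusion h
      · intro X Y h; exact Fm.noConfusion h
      · intro X Y h; exact Fm.noConfusion h
      · intro X h; exact Fm.noConfusion h
      · intro X hX Δ' C0 hp Δ₀ hΔ₀
        injection hX with e1
        subst e1
        have c1 := ihn A₁ s1 [Item.br Γ'] prem Δ' C0 hp
        rw [hΔ₀ Γ']
        exact c1

/-- Cut admissibility in Lb*₁. -/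
theorem cut (A : Fm) (Γ : List Item) (d1 : Lb1 Γ A) (Δ : Ctx) (C : Fm)
    (d2 : Lb1 (Δ.plug [Item.fm A]) C) : Lb1 (Δ.plug Γ) C :=
  cut_aux (sizeOf A) A le_rfl Γ d1 Δ C d2
/-- Lb* is a subsystem of Lb*₁. -/
theorem LbS_to_Lb1 (Γ : List Item) (C : Fm) (h : LbS Γ C) : Lb1 Γ C := by
  induction h with
  | ax p => exact Lb1.ax p
  | ldiv_l Γ Δ A B C _ _ ih1 ih2 => exact Lb1.ldiv_l Γ Δ A B C ih1 ih2
  | ldiv_r Γ A B _ ih => exact Lb1.ldiv_r Γ A B ih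
  | rdiv_l Γ Δ A B C _ _ ih1 ih2 => exact Lb1.rdiv_l Γ Δ A B C ih1 ih2
  | rdiv_r Γ A B _ ih => exact Lb1.rdiv_r Γ A B ih
  | mul_l Δ A B C _ ih => exact Lb1.mul_l Δ A B C ih
  | mul_r Γ Θ A B _ _ ih1 ih2 => exact Lb1.mul_r Γ Θ A B ih1 ih2
  | dia_l Δ A C _ ih => exact Lb1.dia_l Δ A C ih
  | dia_r Γ A _ ih => exact Lb1.dia_r Γ A ih
  | box_l Δ A C _ ih => exact Lb1.box_l Δ A C ih
  | box_r Γ A _ ih => exact Lb1.box_r Γ A ih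

/-- Identity sequents A → A are derivable for all formulas. -/
theorem Lb1_id (A : Fm) : Lb1 [Item.fm A] A := by
  induction A with
  | var p => exact Lb1.ax p
  | one =>
    have := Lb1.one_l (Ctx.hole [] []) Fm.one (by simpa [Ctx.plug] using Lb1.one_r)
    simpa [Ctx.plug] using this
  | ldiv A B ihA ihB =>
    refine Lb1.ldiv_r _ _ _ ?_
    have := Lb1.ldiv_l [Item.fm A] (Ctx.hole [] []) A B B ihA
      (by simpa [Ctx.plug] using ihB)
    simpa [Ctx.plug] using this
  | rdiv B A ihB ihA =>
    refine Lb1.rdiv_r _ _ _ ?_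
    have := Lb1.rdiv_l [Item.fm A] (Ctx.hole [] []) A B B ihA
      (by simpa [Ctx.plug] using ihB)
    simpa [Ctx.plug] using this
  | mul A B ihA ihB =>
    have h1 := Lb1.mul_r [Item.fm A] [Item.fm B] A B ihA ihB
    have := Lb1.mul_l (Ctx.hole [] []) A B (Fm.mul A B) (by simpa [Ctx.plug] using h1)
    simpa [Ctx.plug] using this
  | dia A ihA =>
    have h1 := Lb1.dia_r [Item.fm A] A ihA
    have := Lb1.dia_l (Ctx.hole [] []) A (Fm.dia A) (by simpa [Ctx.plug] using h1)
    simpa [Ctx.plug] using this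
  | box A ihA =>
    refine Lb1.box_r _ _ ?_
    have := Lb1.box_l (Ctx.hole [] []) A A (by simpa [Ctx.plug] using ihA)
    simpa [Ctx.plug] using this

/-- Substitution on contexts. -/
def Ctx.subst (q : ℕ) (E : Fm) : Ctx → Ctx
  | .hole l r => .hole (Meta.subst q E l) (Meta.subst q E r)
  | .br l c r => .br (Meta.subst q E l) (c.subst q E) (Meta.subst q E r)

@[simp] theorem Meta.subst_append (q : ℕ) (E : Fm) (X Y : List Item) :
    Meta.subst q E (X ++ Y) = Meta.subst q E X ++ Meta.subst q E Y := by
  induction X with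
  | nil => simp [Meta.subst]
  | cons i X ih => simp [Meta.subst, ih]

@[simp] theorem Meta.subst_plug (q : ℕ) (E : Fm) (Δ : Ctx) (Ψ : List Item) :
    Meta.subst q E (Δ.plug Ψ) = (Δ.subst q E).plug (Meta.subst q E Ψ) := by
  induction Δ with
  | hole l r => simp [Ctx.plug, Ctx.subst]
  | br l c r ih => simp [Ctx.plug, Ctx.subst, Meta.subst, Item.subst, ih]

/-- Substitution admissibility in Lb*₁. -/
theorem Lb1_subst (q : ℕ) (E : Fm) {Γ : List Item} {C : Fm} (h : Lb1 Γ C) :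
    Lb1 (Meta.subst q E Γ) (Fm.subst q E C) := by
  induction h with
  | ax p =>
    by_cases hp : p = q
    · subst hp
      simpa [Meta.subst, Item.subst, Fm.subst] using Lb1_id E
    · simpa [Meta.subst, Item.subst, Fm.subst, hp] using Lb1.ax p
  | ldiv_l Γ Δ A B C _ _ ih1 ih2 =>
    have := Lb1.ldiv_l (Meta.subst q E Γ) (Δ.subst q E) (Fm.subst q E A) (Fm.subst q E B)
      (Fm.subst q E C) ih1 (by simpa [Meta.subst, Item.subst] using ih2)
    simpa [Meta.subst, Item.subst, Fm.subst] using this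
  | ldiv_r Γ A B _ ih =>
    exact Lb1.ldiv_r _ _ _ (by simpa [Meta.subst, Item.subst] using ih)
  | rdiv_l Γ Δ A B C _ _ ih1 ih2 =>
    have := Lb1.rdiv_l (Meta.subst q E Γ) (Δ.subst q E) (Fm.subst q E A) (Fm.subst q E B)
      (Fm.subst q E C) ih1 (by simpa [Meta.subst, Item.subst] using ih2)
    simpa [Meta.subst, Item.subst, Fm.subst] using this
  | rdiv_r Γ A B _ ih =>
    exact Lb1.rdiv_r _ _ _ (by simpa [Meta.subst, Item.subst] using ih)
  | mul_l Δ A B C _ ih =>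
    have := Lb1.mul_l (Δ.subst q E) (Fm.subst q E A) (Fm.subst q E B) (Fm.subst q E C)
      (by simpa [Meta.subst, Item.subst] using ih)
    simpa [Meta.subst, Item.subst, Fm.subst] using this
  | mul_r Γ Θ A B _ _ ih1 ih2 =>
    simpa [Fm.subst] using Lb1.mul_r _ _ _ _ ih1 ih2
  | dia_l Δ A C _ ih =>
    have := Lb1.dia_l (Δ.subst q E) (Fm.subst q E A) (Fm.subst q E C)
      (by simpa [Meta.subst, Item.subst] using ih)
    simpa [Meta.subst, Item.subst, Fm.subst] using this
  | dia_r Γ A _ ih =>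
    simpa [Meta.subst, Item.subst, Fm.subst] using Lb1.dia_r _ _ ih
  | box_l Δ A C _ ih =>
    have := Lb1.box_l (Δ.subst q E) (Fm.subst q E A) (Fm.subst q E C)
      (by simpa [Meta.subst, Item.subst] using ih)
    simpa [Meta.subst, Item.subst, Fm.subst] using this
  | box_r Γ A _ ih =>
    exact Lb1.box_r _ _ (by simpa [Meta.subst, Item.subst, Fm.subst] using ih)
  | one_l Δ C _ ih =>
    have := Lb1.one_l (Δ.subst q E) (Fm.subst q E C)
      (by simpa [Meta.subst] using ih)
    simpa [Meta.subst, Item.subst, Fm.subst] using this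
  | one_r =>
    simpa [Meta.subst, Fm.subst] using Lb1.one_r
/-- The formula 𝟏\𝟏, which is the substitution image of q\q under q ↦ 𝟏. -/
abbrev UU : Fm := Fm.ldiv Fm.one Fm.one

theorem UU_r : Lb1 [] UU := by
  have h0 : Lb1 [Item.fm Fm.one] Fm.one := by
    simpa [Ctx.plug] using Lb1.one_l (Ctx.hole [] []) Fm.one
      (by simpa [Ctx.plug] using Lb1.one_r)
  exact Lb1.ldiv_r [] _ _ (by simpa using h0)

theorem UU_l (Δ : Ctx) (C : Fm) (h : Lb1 (Δ.plug []) C) :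
    Lb1 (Δ.plug [Item.fm UU]) C := by
  have h1 := Lb1.one_l Δ C h
  have := Lb1.ldiv_l [] Δ Fm.one Fm.one C Lb1.one_r h1
  simpa using this

theorem triple_r {Γ : List Item} {A : Fm} (h : Lb1 Γ A) :
    Lb1 Γ (Fm.mul (Fm.mul UU A) UU) := by
  have h1 := Lb1.mul_r [] Γ UU A UU_r h
  have h2 := Lb1.mul_r ([] ++ Γ) [] _ UU h1 UU_r
  simpa using h2

theorem triple_l {A C : Fm} (h : Lb1 [Item.fm A] C) :
    Lb1 [Item.fm (Fm.mul (Fm.mul UU A) UU)] C := by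
  have h1 : Lb1 [Item.fm A, Item.fm UU] C := by
    simpa [Ctx.plug] using UU_l (Ctx.hole [Item.fm A] []) C (by simpa [Ctx.plug] using h)
  have h2 : Lb1 [Item.fm UU, Item.fm A, Item.fm UU] C := by
    simpa [Ctx.plug] using UU_l (Ctx.hole [] [Item.fm A, Item.fm UU]) C
      (by simpa [Ctx.plug] using h1)
  have h3 : Lb1 [Item.fm (Fm.mul UU A), Item.fm UU] C := by
    simpa [Ctx.plug] using Lb1.mul_l (Ctx.hole [] [Item.fm UU]) UU A C
      (by simpa [Ctx.plug] using h2)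
  simpa [Ctx.plug] using Lb1.mul_l (Ctx.hole [] []) (Fm.mul UU A) UU C
    (by simpa [Ctx.plug] using h3)

theorem wrap_div {A B : Fm} (h : Lb1 [Item.fm A] B) :
    Lb1 [Item.fm A] (Fm.ldiv UU (Fm.rdiv B UU)) := by
  have h1 : Lb1 [Item.fm A, Item.fm UU] B := by
    simpa [Ctx.plug] using UU_l (Ctx.hole [Item.fm A] []) B (by simpa [Ctx.plug] using h)
  have h2 : Lb1 [Item.fm UU, Item.fm A, Item.fm UU] B := by
    simpa [Ctx.plug] using UU_l (Ctx.hole [] [Item.fm A, Item.fm UU]) B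
      (by simpa [Ctx.plug] using h1)
  refine Lb1.ldiv_r _ _ _ (Lb1.rdiv_r _ _ _ ?_)
  simpa using h2

/-- The key equivalences: for a q-free formula A, the substitution images
(under q ↦ 𝟏) of τ⁻(A) and τ⁺(A) are both equivalent to A in Lb*₁. -/
theorem tau_lemma (q : ℕ) : ∀ (A : Fm), A.qFree q →
    ((Lb1 [Item.fm A] (Fm.subst q Fm.one (tauM q A)) ∧
      Lb1 [Item.fm (Fm.subst q Fm.one (tauM q A))] A) ∧
     (Lb1 [Item.fm A] (Fm.subst q Fm.one (tauP q A)) ∧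
      Lb1 [Item.fm (Fm.subst q Fm.one (tauP q A))] A)) := by
  intro A
  induction A with
  | var p =>
    intro hp'
    have hp : p ≠ q := hp'
    refine ⟨⟨?_, ?_⟩, ?_, ?_⟩ <;> simp only [tauM, tauP, Fm.subst, qq, if_neg hp]
    · exact Lb1.ax p
    · exact Lb1.ax p
    · simpa using triple_r (Lb1.ax p)
    · simpa using triple_l (Lb1.ax p)
  | one =>
    intro _
    have hU1 : Lb1 [Item.fm Fm.one] UU := by
      simpa [Ctx.plug] using Lb1.one_l (Ctx.hole [] []) UU (by simpa [Ctx.plug] using UU_r)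
    have hU2 : Lb1 [Item.fm UU] Fm.one := by
      simpa [Ctx.plug] using UU_l (Ctx.hole [] []) Fm.one (by simpa [Ctx.plug] using Lb1.one_r)
    refine ⟨⟨?_, ?_⟩, ?_, ?_⟩ <;> simp only [tauM, tauP, Fm.subst, qq] <;> try simp
    · exact hU1
    · exact hU2
    · exact hU1
    · exact hU2
  | ldiv A B ihA ihB =>
    intro hq
    obtain ⟨⟨aMp, aMm⟩, aPp, aPm⟩ := ihA hq.1
    obtain ⟨⟨bMp, bMm⟩, bPp, bPm⟩ := ihB hq.2
    refine ⟨⟨?_, ?_⟩, ?_, ?_⟩ <;> simp only [tauM, tauP, Fm.subst]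
    · refine Lb1.ldiv_r _ _ _ ?_
      have := Lb1.ldiv_l [Item.fm (Fm.subst q Fm.one (tauM q A))] (Ctx.hole [] [])
        A B _ aMm (by simpa [Ctx.plug] using bMp)
      simpa [Ctx.plug] using this
    · refine Lb1.ldiv_r _ _ _ ?_
      have := Lb1.ldiv_l [Item.fm A] (Ctx.hole [] []) _ _ B aMp
        (by simpa [Ctx.plug] using bMm)
      simpa [Ctx.plug] using this
    · refine Lb1.ldiv_r _ _ _ ?_
      have := Lb1.ldiv_l [Item.fm (Fm.subst q Fm.one (tauM q A))] (Ctx.hole [] [])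
        A B _ aMm (by simpa [Ctx.plug] using bPp)
      simpa [Ctx.plug] using this
    · refine Lb1.ldiv_r _ _ _ ?_
      have := Lb1.ldiv_l [Item.fm A] (Ctx.hole [] []) _ _ B aMp
        (by simpa [Ctx.plug] using bPm)
      simpa [Ctx.plug] using this
  | rdiv B A ihB ihA =>
    intro hq
    obtain ⟨⟨bMp, bMm⟩, bPp, bPm⟩ := ihB hq.1
    obtain ⟨⟨aMp, aMm⟩, aPp, aPm⟩ := ihA hq.2
    refine ⟨⟨?_, ?_⟩, ?_, ?_⟩ <;> simp only [tauM, tauP, Fm.subst]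
    · refine Lb1.rdiv_r _ _ _ ?_
      have := Lb1.rdiv_l [Item.fm (Fm.subst q Fm.one (tauP q A))] (Ctx.hole [] [])
        A B _ aPm (by simpa [Ctx.plug] using bMp)
      simpa [Ctx.plug] using this
    · refine Lb1.rdiv_r _ _ _ ?_
      have := Lb1.rdiv_l [Item.fm A] (Ctx.hole [] []) _ _ B aPp
        (by simpa [Ctx.plug] using bMm)
      simpa [Ctx.plug] using this
    · refine Lb1.rdiv_r _ _ _ ?_
      have := Lb1.rdiv_l [Item.fm (Fm.subst q Fm.one (tauP q A))] (Ctx.hole [] [])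
        A B _ aPm (by simpa [Ctx.plug] using bPp)
      simpa [Ctx.plug] using this
    · refine Lb1.rdiv_r _ _ _ ?_
      have := Lb1.rdiv_l [Item.fm A] (Ctx.hole [] []) _ _ B aPp
        (by simpa [Ctx.plug] using bPm)
      simpa [Ctx.plug] using this
  | mul A B ihA ihB =>
    intro hq
    obtain ⟨⟨aMp, aMm⟩, aPp, aPm⟩ := ihA hq.1
    obtain ⟨⟨bMp, bMm⟩, bPp, bPm⟩ := ihB hq.2
    refine ⟨⟨?_, ?_⟩, ?_, ?_⟩ <;> simp only [tauM, tauP, Fm.subst]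
    · have h1 := Lb1.mul_r [Item.fm A] [Item.fm B] _ _ aMp bMp
      have := Lb1.mul_l (Ctx.hole [] []) A B _ (by simpa [Ctx.plug] using h1)
      simpa [Ctx.plug] using this
    · have h1 := Lb1.mul_r [Item.fm (Fm.subst q Fm.one (tauM q A))]
        [Item.fm (Fm.subst q Fm.one (tauM q B))] A B aMm bMm
      have := Lb1.mul_l (Ctx.hole [] []) _ _ (Fm.mul A B) (by simpa [Ctx.plug] using h1)
      simpa [Ctx.plug] using this
    · have h1 := Lb1.mul_r [Item.fm A] [Item.fm B] _ _ aPp bPp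
      have := Lb1.mul_l (Ctx.hole [] []) A B _ (by simpa [Ctx.plug] using h1)
      simpa [Ctx.plug] using this
    · have h1 := Lb1.mul_r [Item.fm (Fm.subst q Fm.one (tauP q A))]
        [Item.fm (Fm.subst q Fm.one (tauP q B))] A B aPm bPm
      have := Lb1.mul_l (Ctx.hole [] []) _ _ (Fm.mul A B) (by simpa [Ctx.plug] using h1)
      simpa [Ctx.plug] using this
  | dia A ihA =>
    intro hq
    obtain ⟨⟨aMp, aMm⟩, aPp, aPm⟩ := ihA hq
    have coreM : Lb1 [Item.fm (Fm.dia A)] (Fm.dia (Fm.subst q Fm.one (tauM q A))) := by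
      have h1 := Lb1.dia_r [Item.fm A] _ aMp
      have := Lb1.dia_l (Ctx.hole [] []) A _ (by simpa [Ctx.plug] using h1)
      simpa [Ctx.plug] using this
    have coreM' : Lb1 [Item.fm (Fm.dia (Fm.subst q Fm.one (tauM q A)))] (Fm.dia A) := by
      have h1 := Lb1.dia_r [Item.fm (Fm.subst q Fm.one (tauM q A))] A aMm
      have := Lb1.dia_l (Ctx.hole [] []) _ (Fm.dia A) (by simpa [Ctx.plug] using h1)
      simpa [Ctx.plug] using this
    have coreP : Lb1 [Item.fm (Fm.dia A)] (Fm.dia (Fm.subst q Fm.one (tauP q A))) := by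
      have h1 := Lb1.dia_r [Item.fm A] _ aPp
      have := Lb1.dia_l (Ctx.hole [] []) A _ (by simpa [Ctx.plug] using h1)
      simpa [Ctx.plug] using this
    have coreP' : Lb1 [Item.fm (Fm.dia (Fm.subst q Fm.one (tauP q A)))] (Fm.dia A) := by
      have h1 := Lb1.dia_r [Item.fm (Fm.subst q Fm.one (tauP q A))] A aPm
      have := Lb1.dia_l (Ctx.hole [] []) _ (Fm.dia A) (by simpa [Ctx.plug] using h1)
      simpa [Ctx.plug] using this
    refine ⟨⟨?_, ?_⟩, ?_, ?_⟩ <;> simp only [tauM, tauP, Fm.subst, qq] <;> try simp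
    · exact coreM
    · exact coreM'
    · simpa using triple_r coreP
    · simpa using triple_l coreP'
  | box A ihA =>
    intro hq
    obtain ⟨⟨aMp, aMm⟩, aPp, aPm⟩ := ihA hq
    have coreP : Lb1 [Item.fm (Fm.box A)] (Fm.box (Fm.subst q Fm.one (tauM q A))) := by
      refine Lb1.box_r _ _ ?_
      have := Lb1.box_l (Ctx.hole [] []) A _ (by simpa [Ctx.plug] using aMp)
      simpa [Ctx.plug] using this
    have s0 : Lb1 [Item.br [Item.fm (Fm.box (Fm.subst q Fm.one (tauM q A)))]] A := by
      have := Lb1.box_l (Ctx.hole [] []) _ A (by simpa [Ctx.plug] using aMm)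
      simpa [Ctx.plug] using this
    have coreP' : Lb1 [Item.fm (Fm.box (Fm.subst q Fm.one (tauM q A)))] (Fm.box A) :=
      Lb1.box_r _ _ s0
    refine ⟨⟨?_, ?_⟩, ?_, ?_⟩ <;> simp only [tauM, tauP, Fm.subst, qq] <;> try simp
    · exact wrap_div coreP
    · -- M⁻
      have s1 : Lb1 [Item.br [Item.fm (Fm.rdiv (Fm.box (Fm.subst q Fm.one (tauM q A))) UU)]] A := by
        have := Lb1.rdiv_l [] (Ctx.br [] (Ctx.hole [] []) []) UU
          (Fm.box (Fm.subst q Fm.one (tauM q A))) A UU_r (by simpa [Ctx.plug] using s0)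
        simpa [Ctx.plug] using this
      have s2 : Lb1 [Item.br [Item.fm (Fm.ldiv UU
          (Fm.rdiv (Fm.box (Fm.subst q Fm.one (tauM q A))) UU))]] A := by
        have := Lb1.ldiv_l [] (Ctx.br [] (Ctx.hole [] []) []) UU _ A UU_r
          (by simpa [Ctx.plug] using s1)
        simpa [Ctx.plug] using this
      exact Lb1.box_r _ _ s2
    · exact coreP
    · exact coreP'
mutual
/-- Replacing a single (substituted, translated) item by the original item in
the antecedent, using cut. -/
theorem repItem (q : ℕ) (i : Item) (hi : i.qFree q) :
    ∀ (Δ : Ctx) (C : Fm), Lb1 (Δ.plug [Item.subst q Fm.one (tauItem q i)]) C →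
      Lb1 (Δ.plug [i]) C := by
  cases i with
  | fm A =>
    intro Δ C h
    have hA : A.qFree q := hi
    have d1 := ((tau_lemma q A hA).1).1
    have := cut (Fm.subst q Fm.one (tauM q A)) [Item.fm A] d1 Δ C
      (by simpa [tauItem, Item.subst] using h)
    simpa using this
  | br Γ' =>
    intro Δ C h
    have hΓ : MetaQFree q Γ' := hi
    have := repMeta q Γ' hΓ (Δ.comp (Ctx.br [] (Ctx.hole [] []) [])) C
      (by simpa [Ctx.plug, tauItem, Item.subst] using h)
    simpa [Ctx.plug] using this
termination_by sizeOf i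

/-- Replacing a whole (substituted, translated) meta-formula by the original
meta-formula in the antecedent. -/
theorem repMeta (q : ℕ) (Γ : List Item) (hΓ : MetaQFree q Γ) :
    ∀ (Δ : Ctx) (C : Fm), Lb1 (Δ.plug (Meta.subst q Fm.one (tauMeta q Γ))) C →
      Lb1 (Δ.plug Γ) C := by
  cases Γ with
  | nil => intro Δ C h; simpa [tauMeta, Meta.subst] using h
  | cons i Γ' =>
    intro Δ C h
    have h1 := repItem q i hΓ.1
      (Δ.comp (Ctx.hole [] (Meta.subst q Fm.one (tauMeta q Γ')))) C
      (by simpa [Ctx.plug, tauMeta, Meta.subst] using h)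
    have h2 := repMeta q Γ' hΓ.2 (Δ.comp (Ctx.hole [i] [])) C
      (by simpa [Ctx.plug] using h1)
    simpa [Ctx.plug] using h2
termination_by sizeOf Γ
end

/-- ('If' direction of the main theorem.) For any
Lb*₁-sequent Γ → C in which the variable q does not occur: if
τ⁻(Γ) → τ⁺(C) is derivable in Lb*, then Γ → C is derivable in Lb*₁. -/
theorem LbS_translation_to_Lb1 (q : ℕ) (Γ : List Item) (C : Fm)
    (hΓ : MetaQFree q Γ) (hC : Fm.qFree q C)
    (h : LbS (tauMeta q Γ) (tauP q C)) :
    Lb1 Γ C := by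
  have h1 := LbS_to_Lb1 _ _ h
  have h2 := Lb1_subst q Fm.one h1
  have h3 := cut (Fm.subst q Fm.one (tauP q C)) _ h2 (Ctx.hole [] []) C
    (by simpa [Ctx.plug] using ((tau_lemma q C hC).2).2)
  have h4 := repMeta q Γ hΓ (Ctx.hole [] []) C (by simpa [Ctx.plug] using h3)
  simpa [Ctx.plug] using h4
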